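/- The polynomials I_n satisfy the Nielsen identity: for all nonnegative integers m, n, I_{m+n} = m!·n! · ∑_{k=0}^{min(m,n)} (2α)^k / k! · I_{m-k}/(m-k)! · I_{n-k}/(n-k)!. -/

import Mathlib

open MvPolynomial

noncomputable def Ipoly (ν α ξ : ℂ) : ℕ → MvPolynomial (Fin 2) ℂ
  | 0 => 1
  | 1 => C ν * X 1 - C (2 * α) * X 0 - C ξ
  | (n + 2) => (C ν * X 1 - C (2 * α) * X 0 - C ξ) * Ipoly ν α ξ (n + 1)
      + C (2 * α * (n + 1)) * Ipoly ν α ξ n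

/-!
With `L = I₁` and `a = 2α` we have `I (n + 1) = L I n + n a I (n - 1)`. Pascal's rule shows that
the right-hand side `S m n` satisfies `S m (n + 1) = L S m n + n a S m (n - 1) + m a S (m - 1) n`.
Once `S` agrees with `I (· + ·)` at smaller total degree, this is exactly the recurrence for
`I (m + n + 1)`, since the two lower terms combine to `(m + n) a I (m + n - 1)`.
-/

open Finset Nat

section Nielsen

variable {R : Type*} [CommRing R]

/-- At `n = 0` the truncated `n - 1` is harmless: its coefficient vanishes, so `succ 0` says
`I 1 = L`. -/
structure IsHermiteSeq (L a : R) (I : ℕ → R) : Prop where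
  zero : I 0 = 1
  succ : ∀ n, I (n + 1) = L * I n + n * a * I (n - 1)

def nielsenCoeff (m n k : ℕ) : ℕ := k ! * m.choose k * n.choose k

def nielsenTerm (a : R) (I : ℕ → R) (m n k : ℕ) : R :=
  nielsenCoeff m n k * a ^ k * I (m - k) * I (n - k)

def nielsenSum (a : R) (I : ℕ → R) (m n : ℕ) : R :=
  ∑ k ∈ range (min m n + 1), nielsenTerm a I m n k

theorem nielsenCoeff_eq_zero {m n k : ℕ} (h : min m n < k) : nielsenCoeff m n k = 0 := by
  rcases min_lt_iff.mp h with h | h <;> simp [nielsenCoeff, choose_eq_zero_of_lt h]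

theorem nielsenCoeff_succ_succ (m n k : ℕ) :
    nielsenCoeff m (n + 1) (k + 1) = nielsenCoeff m n (k + 1) + m * nielsenCoeff (m - 1) n k := by
  cases m with
  | zero => simp [nielsenCoeff]
  | succ m =>
    simp only [nielsenCoeff, choose_succ_succ' n k, factorial_succ, add_tsub_cancel_right]
    linear_combination (k ! * n.choose k) * (add_one_mul_choose_eq m k).symm

theorem nielsenCoeff_mul_sub (m n k : ℕ) :
    nielsenCoeff m n k * (n - k) = n * nielsenCoeff m (n - 1) k := by
  cases n with
  | zero => simp
  | succ n =>
    simp only [nielsenCoeff, add_tsub_cancel_right]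
    linear_combination (k ! * m.choose k) * (choose_mul_succ_eq n k).symm

theorem cast_nielsenCoeff {K : Type*} [Field K] [CharZero K] {m n k : ℕ} (hm : k ≤ m)
    (hn : k ≤ n) :
    (nielsenCoeff m n k : K) = m ! * n ! / (k ! * (m - k)! * (n - k)!) := by
  rw [nielsenCoeff, cast_mul, cast_mul, cast_choose K hm, cast_choose K hn]
  field_simp

variable {a L : R} {I : ℕ → R}

theorem nielsenSum_eq_sum_range {m n N : ℕ} (h : min m n < N) :
    nielsenSum a I m n = ∑ k ∈ range N, nielsenTerm a I m n k := by
  refine sum_subset (range_subset_range.mpr h) fun k _ hk => ?_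
  rw [mem_range, not_lt] at hk
  simp [nielsenTerm, nielsenCoeff_eq_zero (by omega : min m n < k)]

theorem nielsenSum_zero_right (h0 : I 0 = 1) (m : ℕ) : nielsenSum a I m 0 = I m := by
  simp [nielsenSum, nielsenTerm, nielsenCoeff, h0]

namespace IsHermiteSeq

theorem nielsenSum_succ_right (hI : IsHermiteSeq L a I) (m n : ℕ) :
    nielsenSum a I m (n + 1) =
      L * nielsenSum a I m n + n * a * nielsenSum a I m (n - 1)
        + m * a * nielsenSum a I (m - 1) n := by
  -- Pascal's rule in `n` splits every term: one half is the recurrence for `I (n + 1 - k)`,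
  -- the other, through `(k + 1) * m.choose (k + 1) = m * (m - 1).choose k`, lowers `m`.
  set u : ℕ → R := fun j => nielsenCoeff m n j * a ^ j * I (m - j) * I (n + 1 - j) with hu
  have hshift (k : ℕ) : nielsenTerm a I m (n + 1) (k + 1) =
      u (k + 1) + m * a * nielsenTerm a I (m - 1) n k := by
    simp only [hu, nielsenTerm]
    rw [nielsenCoeff_succ_succ, show m - (k + 1) = m - 1 - k by omega, add_tsub_add_eq_tsub_right]
    push_cast
    ring
  have hrec (j : ℕ) : u j = L * nielsenTerm a I m n j + n * a * nielsenTerm a I m (n - 1) j := by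
    by_cases hj : j ≤ n
    · have hcoeff : (nielsenCoeff m n j : R) * (n - j : ℕ) = n * nielsenCoeff m (n - 1) j := by
        rw [← cast_mul, nielsenCoeff_mul_sub, cast_mul]
      simp only [hu, nielsenTerm]
      rw [show n + 1 - j = n - j + 1 by omega, hI.succ,
        show n - j - 1 = n - 1 - j by omega]
      linear_combination a ^ j * a * I (m - j) * I (n - 1 - j) * hcoeff
    · have h1 : nielsenCoeff m n j = 0 := nielsenCoeff_eq_zero (by omega)
      have h2 : nielsenCoeff m (n - 1) j = 0 := nielsenCoeff_eq_zero (by omega)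
      simp [hu, nielsenTerm, h1, h2]
  have hzero : nielsenTerm a I m (n + 1) 0 = u 0 := by simp [hu, nielsenTerm, nielsenCoeff]
  calc nielsenSum a I m (n + 1)
      = ∑ k ∈ range (n + 1), nielsenTerm a I m (n + 1) (k + 1) + nielsenTerm a I m (n + 1) 0 := by
        rw [nielsenSum_eq_sum_range (N := n + 2) (by omega), sum_range_succ']
    _ = ∑ k ∈ range (n + 1), u (k + 1) + u 0
          + m * a * ∑ k ∈ range (n + 1), nielsenTerm a I (m - 1) n k := by
        rw [sum_congr rfl fun k _ => hshift k, sum_add_distrib, mul_sum, hzero]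
        ring
    _ = ∑ j ∈ range (n + 2), u j + m * a * nielsenSum a I (m - 1) n := by
        rw [← sum_range_succ' u, nielsenSum_eq_sum_range (N := n + 1) (by omega)]
    _ = _ := by
        simp only [hrec, sum_add_distrib, ← mul_sum]
        rw [← nielsenSum_eq_sum_range (by omega), ← nielsenSum_eq_sum_range (by omega)]

theorem add_eq_nielsenSum (hI : IsHermiteSeq L a I) (m n : ℕ) :
    I (m + n) = nielsenSum a I m n := by
  induction n using Nat.strong_induction_on generalizing m with
  | _ n ih =>
  cases n with
  | zero => exact (nielsenSum_zero_right hI.zero m).symm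
  | succ n =>
    have hleft : (n : R) * a * I (m + n - 1) = n * a * nielsenSum a I m (n - 1) := by
      cases n with
      | zero => simp
      | succ n => rw [show m + (n + 1) - 1 = m + n by omega, add_tsub_cancel_right, ih n (by omega)]
    have hright : (m : R) * a * I (m + n - 1) = m * a * nielsenSum a I (m - 1) n := by
      cases m with
      | zero => simp
      | succ m => rw [← ih n (by omega), show m + 1 + n - 1 = m + 1 - 1 + n by omega]
    rw [hI.nielsenSum_succ_right, ← add_assoc, hI.succ, ← ih n (lt_add_one n), ← hleft, ← hright]
    push_cast
    ring

end IsHermiteSeq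

end Nielsen

theorem isHermiteSeq_Ipoly (ν α ξ : ℂ) :
    IsHermiteSeq (C ν * X 1 - C (2 * α) * X 0 - C ξ) (C (2 * α)) (Ipoly ν α ξ) where
  zero := rfl
  succ n := by
    rcases n with _ | n
    · simp [Ipoly]
    · rw [Ipoly]
      simp only [C_mul, map_add, map_one, map_natCast, add_tsub_cancel_right, cast_add, cast_one]
      ring

theorem stmt3 (ν α ξ : ℂ) (m n : ℕ) :
    Ipoly ν α ξ (m + n) =
      C ((m.factorial : ℂ) * (n.factorial : ℂ)) *
        ∑ k ∈ Finset.range (min m n + 1),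
          C ((2 * α) ^ k / ((k.factorial : ℂ) * ((m - k).factorial : ℂ)
              * ((n - k).factorial : ℂ))) *
            Ipoly ν α ξ (m - k) * Ipoly ν α ξ (n - k) := by
  rw [(isHermiteSeq_Ipoly ν α ξ).add_eq_nielsenSum, nielsenSum, mul_sum]
  refine sum_congr rfl fun k hk => ?_
  rw [mem_range, Nat.lt_succ_iff, le_min_iff] at hk
  rw [nielsenTerm, ← map_natCast C, ← map_pow, ← map_mul, cast_nielsenCoeff hk.1 hk.2,
    mul_comm_div, map_mul]
  ring
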